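/- arXiv:2005.05562 — 6 statements merged into one kernel-verified Lean document; each statement's English description precedes it below -/
import Mathlib

section
/- Let P ∈ ℝ^{p×d} and Q ∈ ℝ^{q×d} be matrices such that rank(Q) = r_Q and rank([P; Q]) = r. Then there exist matrices S ∈ ℝ^{(r−r_Q)×p}, Z¹ ∈ ℝ^{(p−r+r_Q)×p}, Z² ∈ ℝ^{(p−r+r_Q)×q} such that: (i) the square matrix [S; Z¹] ∈ ℝ^{p×p} is orthogonal; (ii) Z¹P + Z²Q = 0; (iii) SP has full row rank and the pair (SP, Q) has no hidden redundancy, i.e., rank([SP; Q]) = rank(SP) + rank(Q). -/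
/-!
Let `RQ` be the row space of `Q` and `K ⊆ ℝᵖ` the space of coefficient vectors `x` with
`x P ∈ RQ`, i.e. the kernel of `x ↦ x P mod RQ`. The image of that map is the image of the row
space of `P` in `ℝᵈ / RQ`, of dimension `r - r_Q`, so `dim K = p - (r - r_Q)` and
`dim Kᗮ = r - r_Q`. Take for `S` an orthonormal basis of `Kᗮ` and for `Z¹` one of `K`. Each row
of `Z¹ P` lies in `RQ`, which produces `Z²`. No nonzero combination of the rows of `S` lies in `K`,
so no nonzero combination of the rows of `S P` lies in `RQ`: the rows of `S P` are independent
and their span meets `RQ` trivially.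
-/

open Matrix Submodule Module

namespace Matrix

variable {l m₁ m₂ n K : Type*} [Fintype n] [Field K]

theorem rank_fromRows_eq_finrank_sup [Fintype m₁] [Fintype m₂] (A : Matrix m₁ n K)
    (B : Matrix m₂ n K) :
    (fromRows A B).rank = finrank K ↥(span K (Set.range A.row) ⊔ span K (Set.range B.row)) := by
  rw [rank_eq_finrank_span_row, ← span_union]
  exact congrArg (fun s => finrank K (span K s)) (Set.Sum.elim_range A.row B.row)

theorem rank_fromRows_of_disjoint [Fintype m₁] [Fintype m₂] (A : Matrix m₁ n K)
    (B : Matrix m₂ n K) (h : Disjoint (span K (Set.range A.row)) (span K (Set.range B.row))) :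
    (fromRows A B).rank = A.rank + B.rank := by
  have := finrank_sup_add_finrank_inf_eq (span K (Set.range A.row)) (span K (Set.range B.row))
  rwa [h.eq_bot, finrank_bot, add_zero, ← rank_fromRows_eq_finrank_sup,
    ← rank_eq_finrank_span_row, ← rank_eq_finrank_span_row] at this

theorem rank_eq_card_of_forall_vecMul_mem_span [Fintype m₁] {A : Matrix m₁ n K}
    {B : Matrix m₂ n K} (h : ∀ c, c ᵥ* A ∈ span K (Set.range B.row) → c = 0) :
    A.rank = Fintype.card m₁ :=
  LinearIndependent.rank_matrix <| Fintype.linearIndependent_iff.mpr fun c hc =>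
    congrFun (h c (by rw [vecMul_eq_sum]; exact hc ▸ zero_mem _))

theorem rank_fromRows_of_forall_vecMul_mem_span [Fintype m₁] [Fintype m₂] {A : Matrix m₁ n K}
    {B : Matrix m₂ n K} (h : ∀ c, c ᵥ* A ∈ span K (Set.range B.row) → c = 0) :
    (fromRows A B).rank = A.rank + B.rank := by
  refine rank_fromRows_of_disjoint A B (disjoint_def.mpr fun v hvA hvB => ?_)
  rw [← range_vecMulLinear] at hvA
  obtain ⟨c, rfl⟩ := hvA
  simp [h c hvB]

theorem exists_mul_add_mul_eq_zero {o R : Type*} [CommRing R] [Fintype m₁] [Fintype m₂]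
    {Z : Matrix l m₁ R} {P : Matrix m₁ o R} {Q : Matrix m₂ o R}
    (h : ∀ i, Z i ᵥ* P ∈ span R (Set.range Q.row)) :
    ∃ Z' : Matrix l m₂ R, Z * P + Z' * Q = 0 := by
  simp_rw [← range_vecMulLinear] at h
  choose y hy using h
  refine ⟨-Matrix.of y, ?_⟩
  have hyQ : Matrix.of y * Q = Z * P := funext hy
  rw [Matrix.neg_mul, hyQ, add_neg_cancel]

theorem mul_transpose_self_of_orthonormal [DecidableEq l] {M : Matrix l n ℝ}
    (hM : Orthonormal ℝ fun i => WithLp.toLp 2 (M i)) : M * Mᵀ = 1 := by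
  ext i j
  have hij := orthonormal_iff_ite.mp hM i j
  rw [EuclideanSpace.inner_eq_star_dotProduct] at hij
  simp [← hij, Matrix.mul_apply, one_apply, dotProduct, mul_comm]

end Matrix

theorem Submodule.finrank_map_mkQ_add_finrank {K V : Type*} [Field K] [AddCommGroup V]
    [Module K V] [FiniteDimensional K V] (U W : Submodule K V) :
    finrank K (U.map W.mkQ) + finrank K W = finrank K ↥(U ⊔ W) := by
  have := LinearMap.finrank_range_add_finrank_ker (W.mkQ ∘ₗ (U ⊔ W).subtype)
  rwa [LinearMap.range_comp, range_subtype, map_sup, mkQ_map_self, sup_bot_eq, LinearMap.ker_comp,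
    ker_mkQ, (comapSubtypeEquivOfLe le_sup_right).finrank_eq] at this

theorem Orthonormal.sumElim {𝕜 E ι κ : Type*} [RCLike 𝕜] [SeminormedAddCommGroup E]
    [InnerProductSpace 𝕜 E] {v : ι → E} {w : κ → E} (hv : Orthonormal 𝕜 v)
    (hw : Orthonormal 𝕜 w) (hvw : ∀ i j, inner 𝕜 (v i) (w j) = 0) :
    Orthonormal 𝕜 (Sum.elim v w) := by
  classical
  rw [orthonormal_iff_ite] at hv hw ⊢
  rintro (i | i) (j | j)
  · simpa using hv i j
  · simpa using hvw i j
  · simpa using inner_eq_zero_symm.mp (hvw j i)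
  · simpa using hw i j

theorem Submodule.exists_orthogonal_fromRows {p m k : ℕ}
    (K : Submodule ℝ (EuclideanSpace ℝ (Fin p))) (hm : finrank ℝ Kᗮ = m) (hk : finrank ℝ K = k) :
    ∃ (S : Matrix (Fin m) (Fin p) ℝ) (Z : Matrix (Fin k) (Fin p) ℝ),
      fromRows S Z * (fromRows S Z)ᵀ = 1 ∧ (fromRows S Z)ᵀ * fromRows S Z = 1 ∧
      (∀ i, WithLp.toLp 2 (Z i) ∈ K) ∧ ∀ c, WithLp.toLp 2 (c ᵥ* S) ∈ K → c = 0 := by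
  let bS := (stdOrthonormalBasis ℝ Kᗮ).reindex (finCongr hm)
  let bZ := (stdOrthonormalBasis ℝ K).reindex (finCongr hk)
  let S : Matrix (Fin m) (Fin p) ℝ := .of fun i => (bS i : EuclideanSpace ℝ (Fin p)).ofLp
  let Z : Matrix (Fin k) (Fin p) ℝ := .of fun i => (bZ i : EuclideanSpace ℝ (Fin p)).ofLp
  have hrows : Orthonormal ℝ fun i => WithLp.toLp 2 (fromRows S Z i) := by
    convert (bS.orthonormal.comp_linearIsometry Kᗮ.subtypeₗᵢ).sumElim
      (bZ.orthonormal.comp_linearIsometry K.subtypeₗᵢ)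
      fun i j => inner_left_of_mem_orthogonal (bZ j).2 (bS i).2 using 1
    ext (i | i) <;> rfl
  have hMMT := mul_transpose_self_of_orthonormal hrows
  have hdim : m + k = p := by
    rw [← hm, ← hk, add_comm, K.finrank_add_finrank_orthogonal, finrank_euclideanSpace_fin]
  refine ⟨S, Z, hMMT, (mul_eq_one_comm_of_equiv (finSumFinEquiv.trans (finCongr hdim))).mp hMMT,
    fun i => (bZ i).2, fun c hc => ?_⟩
  let x : Kᗮ := ∑ i, c i • bS i
  have hx : (x : EuclideanSpace ℝ (Fin p)) = WithLp.toLp 2 (c ᵥ* S) := by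
    simp only [x, Submodule.coe_sum, Submodule.coe_smul, vecMul_eq_sum, WithLp.toLp_sum,
      WithLp.toLp_smul]
    rfl
  have hx0 : x = 0 := by
    rw [← Submodule.coe_eq_zero]
    exact disjoint_def.mp K.orthogonal_disjoint _ (hx ▸ hc) x.2
  exact funext (Fintype.linearIndependent_iff.mp bS.orthonormal.linearIndependent c hx0)

/-- Removal of hidden redundancy: given `P`, `Q` with `rank Q = rQ` and
`rank [P; Q] = r`, there are `S`, `Z¹`, `Z²` with `[S; Z¹]` orthogonal,
`Z¹P + Z²Q = 0`, `SP` of full row rank, and `(SP, Q)` without hidden redundancy. -/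
theorem removal_of_hidden_redundancy
    (p q d rQ r : ℕ) (P : Matrix (Fin p) (Fin d) ℝ) (Q : Matrix (Fin q) (Fin d) ℝ)
    (hQ : Q.rank = rQ) (hPQ : (Matrix.fromRows P Q).rank = r) :
    ∃ (S : Matrix (Fin (r - rQ)) (Fin p) ℝ)
      (Z1 : Matrix (Fin (p - (r - rQ))) (Fin p) ℝ)
      (Z2 : Matrix (Fin (p - (r - rQ))) (Fin q) ℝ),
      (Matrix.fromRows S Z1) * (Matrix.fromRows S Z1)ᵀ = 1 ∧
      (Matrix.fromRows S Z1)ᵀ * (Matrix.fromRows S Z1) = 1 ∧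
      Z1 * P + Z2 * Q = 0 ∧
      (S * P).rank = r - rQ ∧
      (Matrix.fromRows (S * P) Q).rank = (S * P).rank + Q.rank := by
  set RQ := span ℝ (Set.range Q.row)
  let g : EuclideanSpace ℝ (Fin p) →ₗ[ℝ] (Fin d → ℝ) ⧸ RQ :=
    RQ.mkQ ∘ₗ P.vecMulLinear ∘ₗ (WithLp.linearEquiv 2 ℝ (Fin p → ℝ)).toLinearMap
  have hmem_ker (x : Fin p → ℝ) : WithLp.toLp 2 x ∈ LinearMap.ker g ↔ x ᵥ* P ∈ RQ :=
    Quotient.mk_eq_zero RQ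
  have hrange : finrank ℝ (LinearMap.range g) = r - rQ := by
    have hsup := finrank_map_mkQ_add_finrank (span ℝ (Set.range P.row)) RQ
    rw [← rank_fromRows_eq_finrank_sup, hPQ, ← rank_eq_finrank_span_row, hQ] at hsup
    have : LinearMap.range g = (span ℝ (Set.range P.row)).map RQ.mkQ := by
      simp only [g, LinearMap.range_comp, LinearEquiv.range, Submodule.map_top, range_vecMulLinear]
    rw [this]
    omega
  have hrank_nullity := g.finrank_range_add_finrank_ker
  have horth := (LinearMap.ker g).finrank_add_finrank_orthogonal
  rw [finrank_euclideanSpace_fin, hrange] at hrank_nullity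
  rw [finrank_euclideanSpace_fin] at horth
  have hker : finrank ℝ (LinearMap.ker g) = p - (r - rQ) := by omega
  have hperp : finrank ℝ (LinearMap.ker g)ᗮ = r - rQ := by omega
  obtain ⟨S, Z1, hSZ, hZS, hZ1, hS⟩ := (LinearMap.ker g).exists_orthogonal_fromRows hperp hker
  obtain ⟨Z2, hZ2⟩ := exists_mul_add_mul_eq_zero fun i => (hmem_ker _).mp (hZ1 i)
  have hSP (c) (hc : c ᵥ* (S * P) ∈ RQ) : c = 0 :=
    hS c ((hmem_ker _).mpr (by rwa [vecMul_vecMul]))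
  refine ⟨S, Z1, Z2, hSZ, hZS, hZ2, ?_, rank_fromRows_of_forall_vecMul_mem_span hSP⟩
  rw [rank_eq_card_of_forall_vecMul_mem_span hSP, Fintype.card_fin]
end

section
/- Let P ∈ ℝ^{p×d} and Q ∈ ℝ^{q×d} both have full row rank with p + q ≤ d, and let G ∈ ℝ^{q×d} be arbitrary. Then there exists a matrix F ∈ ℝ^{d×d} such that the stacked matrix [P; G + QF] ∈ ℝ^{(p+q)×d} has full row rank. -/
open Matrix

/-!
Since `Q` has full row rank it has a right inverse `R`, so `G + Q F` can be made equal to any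
`B` by taking `F = R (B - G)`. It remains to choose `q` rows `B` which, together with the `p`
independent rows of `P`, are linearly independent; this is possible because `p + q ≤ d`: take
independent vectors in a complement of the row space of `P`.
-/

theorem Matrix.exists_mul_eq_one_of_rank_eq_card {K m n : Type*} [Field K] [Fintype m]
    [DecidableEq m] [Fintype n] (Q : Matrix m n K) (hQ : Q.rank = Fintype.card m) :
    ∃ R : Matrix n m K, Q * R = 1 := by
  classical
  have hrange : LinearMap.range Q.mulVecLin = ⊤ :=
    Submodule.eq_top_of_finrank_eq (by rw [← Matrix.rank, hQ, Module.finrank_fintype_fun_eq_card])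
  obtain ⟨g, hg⟩ := Q.mulVecLin.exists_rightInverse_of_surjective hrange
  refine ⟨LinearMap.toMatrix' g, ?_⟩
  rw [← LinearMap.toMatrix'_id, ← hg, LinearMap.toMatrix'_comp, ← Matrix.toLin'_apply',
    LinearMap.toMatrix'_toLin']

theorem LinearIndependent.exists_linearIndependent_sumElim {K V ι κ : Type*} [DivisionRing K]
    [AddCommGroup V] [Module K V] [FiniteDimensional K V] [Fintype ι] [Fintype κ] {v : ι → V}
    (hv : LinearIndependent K v)
    (hcard : Fintype.card ι + Fintype.card κ ≤ Module.finrank K V) :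
    ∃ w : κ → V, LinearIndependent K (Sum.elim v w) := by
  obtain ⟨W, hW⟩ := Submodule.exists_isCompl (Submodule.span K (Set.range v))
  have hWrank : Fintype.card κ ≤ Module.finrank K W := by
    have := Submodule.finrank_add_eq_of_isCompl hW
    rw [finrank_span_eq_card hv] at this
    omega
  obtain ⟨w, hw⟩ := exists_linearIndependent_of_le_finrank hWrank
  refine ⟨W.subtype ∘ w ∘ Fintype.equivFin κ, hv.sum_type ?_ ?_⟩
  · exact (hw.comp _ (Fintype.equivFin κ).injective).map' W.subtype W.ker_subtype
  · refine hW.disjoint.mono_right (Submodule.span_le.2 ?_)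
    rintro _ ⟨i, rfl⟩
    exact (w _).2

theorem Matrix.exists_rank_fromRows_eq {K m n l : Type*} [Field K] [Fintype m] [Fintype n]
    [Fintype l] (P : Matrix m n K) (hP : P.rank = Fintype.card m)
    (hcard : Fintype.card m + Fintype.card l ≤ Fintype.card n) :
    ∃ B : Matrix l n K, (fromRows P B).rank = Fintype.card m + Fintype.card l := by
  have hProws : LinearIndependent K P.row := by
    rw [linearIndependent_iff_card_eq_finrank_span, Set.finrank, ← rank_eq_finrank_span_row, hP]
  obtain ⟨B, hB⟩ := hProws.exists_linearIndependent_sumElim (κ := l)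
    (by rwa [Module.finrank_fintype_fun_eq_card])
  exact ⟨B, by rw [hB.rank_matrix (M := fromRows P B), Fintype.card_sum]⟩

/-- If `P`, `Q` have full row rank, `p + q ≤ d`, and `G` is arbitrary, then there is
`F ∈ ℝ^{d×d}` such that `[P; G + QF]` has full row rank. -/
theorem exists_F_stacked_full_row_rank_with_G
    (p q d : ℕ) (hpq : p + q ≤ d)
    (P : Matrix (Fin p) (Fin d) ℝ) (Q : Matrix (Fin q) (Fin d) ℝ)
    (G : Matrix (Fin q) (Fin d) ℝ)
    (hP : P.rank = p) (hQ : Q.rank = q) :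
    ∃ F : Matrix (Fin d) (Fin d) ℝ,
      (Matrix.fromRows P (G + Q * F)).rank = p + q := by
  obtain ⟨R, hQR⟩ := Q.exists_mul_eq_one_of_rank_eq_card (by rwa [Fintype.card_fin])
  obtain ⟨B, hB⟩ := P.exists_rank_fromRows_eq (l := Fin q) (by rwa [Fintype.card_fin])
    (by simpa only [Fintype.card_fin] using hpq)
  refine ⟨R * (B - G), ?_⟩
  rw [← Matrix.mul_assoc, hQR, Matrix.one_mul, add_sub_cancel, hB, Fintype.card_fin,
    Fintype.card_fin]
end

section
/- Consider the strangeness-free system: for all n ≥ n₀, Â₁(n)x(n+2) + B̂₁(n)x(n+1) + Ĉ₁(n)x(n) = g₁(n); B̂₂(n)x(n+1) + Ĉ₂(n)x(n) = g₂(n); Ĉ₃(n)x(n) = g₃(n); 0 = g₄(n), where for every n the stacked matrix [Â₁(n); B̂₂(n+1); Ĉ₃(n+2)] ∈ ℝ^{(r₂+r₁+r₀)×d} is square (r₂+r₁+r₀ = d) and invertible. Then for any initial values x₀, x₁ ∈ ℝ^d satisfying the consistency conditions B̂₂(n₀)x₁ + Ĉ₂(n₀)x₀ = g₂(n₀) and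 Ĉ₃(n₀)x₀ = g₃(n₀) and Ĉ₃(n₀+1)x₁ = g₃(n₀+1), and assuming g₄(n) = 0 for all n, there exists a unique sequence x : ℕ → ℝ^d with x(n₀) = x₀, x(n₀+1) = x₁ solving the system for all n ≥ n₀. -/
/-!
Regroup the equations by the latest unknown they involve: the first equation at `n`, the second
at `n + 1` and the third at `n + 2` together read `M n *ᵥ x (n + 2) = (terms in x n, x (n + 1))`
with `M n = [Â₁(n); B̂₂(n+1); Ĉ₃(n+2)]`. The remaining equations, the second at `n₀` and the
third at `n₀` and `n₀ + 1`, are the consistency conditions. Since `M n` is invertible, `x (n + 2)`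
is determined uniquely by `x n` and `x (n + 1)`, and the solution is built and shown unique by
two-step recursion.
-/

open Matrix

def blockEquiv (r₂ r₁ r₀ d : ℕ) (h : r₂ + r₁ + r₀ = d) :
    (Fin r₂ ⊕ (Fin r₁ ⊕ Fin r₀)) ≃ Fin d :=
  ((Equiv.refl (Fin r₂)).sumCongr finSumFinEquiv).trans
    (finSumFinEquiv.trans (finCongr (by omega)))

theorem Matrix.mulVec_bijective_of_isUnit_submatrix {κ ι R : Type*} [Fintype ι] [DecidableEq ι]
    [CommRing R] (N : Matrix κ ι R) (e : κ ≃ ι) (h : IsUnit (N.submatrix e.symm id)) :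
    Function.Bijective N.mulVec := by
  have hcomp : ∀ u, (N.submatrix e.symm id) *ᵥ u = (N *ᵥ u) ∘ e.symm := fun _ => rfl
  refine ⟨fun u v huv => mulVec_injective_of_isUnit h ?_, fun w => ?_⟩
  · rw [hcomp, hcomp, huv]
  · obtain ⟨u, hu⟩ := mulVec_surjective_iff_isUnit.2 h (w ∘ e.symm)
    refine ⟨u, ?_⟩
    rw [hcomp] at hu
    simpa [Function.comp_def] using congrArg (· ∘ e) hu

theorem Matrix.existsUnique_mulVec_eq_of_isUnit_stacked {m₁ m₂ m₃ ι R : Type*} [Fintype ι]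
    [DecidableEq ι] [CommRing R] (A : Matrix m₁ ι R) (B : Matrix m₂ ι R) (C : Matrix m₃ ι R)
    (e : m₁ ⊕ m₂ ⊕ m₃ ≃ ι) (h : IsUnit ((fromRows A (fromRows B C)).submatrix e.symm id))
    (a : m₁ → R) (b : m₂ → R) (c : m₃ → R) :
    ∃! u, A *ᵥ u = a ∧ B *ᵥ u = b ∧ C *ᵥ u = c := by
  simpa only [fromRows_mulVec, Sum.elim_eq_iff] using
    (mulVec_bijective_of_isUnit_submatrix _ e h).existsUnique (Sum.elim a (Sum.elim b c))

section TwoStepRecurrence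

variable {α : Type*}

def twoStepSeq (f : ℕ → α → α → α) (a b : α) : ℕ → α
  | 0 => a
  | 1 => b
  | k + 2 => f k (twoStepSeq f a b k) (twoStepSeq f a b (k + 1))

theorem exists_twoStep_solution (R : ℕ → α → α → α → Prop) (n₀ : ℕ)
    (hR : ∀ n, n₀ ≤ n → ∀ p q, ∃ u, R n p q u) (a b : α) :
    ∃ x : ℕ → α, x n₀ = a ∧ x (n₀ + 1) = b ∧
      ∀ n, n₀ ≤ n → R n (x n) (x (n + 1)) (x (n + 2)) := by
  choose f hf using fun k => hR (n₀ + k) (Nat.le_add_right n₀ k)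
  set x : ℕ → α := fun n => twoStepSeq f a b (n - n₀)
  have hx : ∀ k, x (n₀ + k) = twoStepSeq f a b k := fun k => by simp [x]
  refine ⟨x, hx 0, hx 1, fun n hn => ?_⟩
  obtain ⟨k, rfl⟩ := Nat.exists_eq_add_of_le hn
  simp only [Nat.add_assoc, hx]
  exact hf k _ _

theorem eq_of_twoStep_solutions (R : ℕ → α → α → α → Prop) (n₀ : ℕ)
    (hR : ∀ n, n₀ ≤ n → ∀ p q u v, R n p q u → R n p q v → u = v) {x y : ℕ → α}
    (h₀ : y n₀ = x n₀) (h₁ : y (n₀ + 1) = x (n₀ + 1))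
    (hx : ∀ n, n₀ ≤ n → R n (x n) (x (n + 1)) (x (n + 2)))
    (hy : ∀ n, n₀ ≤ n → R n (y n) (y (n + 1)) (y (n + 2))) :
    ∀ n, n₀ ≤ n → y n = x n := by
  suffices ∀ k, y (n₀ + k) = x (n₀ + k) by
    intro n hn
    obtain ⟨k, rfl⟩ := Nat.exists_eq_add_of_le hn
    exact this k
  refine Nat.twoStepInduction h₀ h₁ fun k hk hk₁ => ?_
  have hyk := hy (n₀ + k) (Nat.le_add_right n₀ k)
  rw [← Nat.add_assoc] at hk₁
  rw [hk, hk₁] at hyk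
  rw [← Nat.add_assoc]
  exact hR _ (Nat.le_add_right n₀ k) _ _ _ _ hyk (hx (n₀ + k) (Nat.le_add_right n₀ k))

end TwoStepRecurrence

theorem forall_ge_and_and_iff {P Q S : ℕ → Prop} {n₀ : ℕ} :
    (∀ n, n₀ ≤ n → P n ∧ Q n ∧ S n) ↔
      Q n₀ ∧ S n₀ ∧ S (n₀ + 1) ∧ ∀ n, n₀ ≤ n → P n ∧ Q (n + 1) ∧ S (n + 2) := by
  refine ⟨fun h => ⟨(h n₀ le_rfl).2.1, (h n₀ le_rfl).2.2, (h (n₀ + 1) (by omega)).2.2,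
    fun n hn => ⟨(h n hn).1, (h (n + 1) (by omega)).2.1, (h (n + 2) (by omega)).2.2⟩⟩, ?_⟩
  rintro ⟨hQ, hS₀, hS₁, h⟩ n hn
  refine ⟨(h n hn).1, ?_, ?_⟩
  · obtain rfl | hlt := hn.eq_or_lt
    · exact hQ
    · obtain ⟨m, rfl⟩ := Nat.exists_eq_add_of_lt hlt
      exact (h (n₀ + m) (by omega)).2.1
  · obtain rfl | rfl | hlt : n = n₀ ∨ n = n₀ + 1 ∨ n₀ + 2 ≤ n := by omega
    · exact hS₀
    · exact hS₁
    · obtain ⟨m, rfl⟩ := Nat.exists_eq_add_of_le hlt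
      simpa only [Nat.add_right_comm] using (h (n₀ + m) (by omega)).2.2

theorem strangeness_free_ivp_unique_solution_general
    (d r₂ r₁ r₀ n₀ : ℕ) (hd : r₂ + r₁ + r₀ = d)
    (A₁ B₁ C₁ : ℕ → Matrix (Fin r₂) (Fin d) ℝ)
    (B₂ C₂ : ℕ → Matrix (Fin r₁) (Fin d) ℝ)
    (C₃ : ℕ → Matrix (Fin r₀) (Fin d) ℝ)
    (g₁ : ℕ → Fin r₂ → ℝ) (g₂ : ℕ → Fin r₁ → ℝ) (g₃ : ℕ → Fin r₀ → ℝ)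
    (hinv : ∀ n, n₀ ≤ n → IsUnit
      ((Matrix.fromRows (A₁ n) (Matrix.fromRows (B₂ (n + 1)) (C₃ (n + 2)))).submatrix
        (blockEquiv r₂ r₁ r₀ d hd).symm id))
    (x₀ x₁ : Fin d → ℝ)
    (hcons₁ : B₂ n₀ *ᵥ x₁ + C₂ n₀ *ᵥ x₀ = g₂ n₀)
    (hcons₂ : C₃ n₀ *ᵥ x₀ = g₃ n₀)
    (hcons₃ : C₃ (n₀ + 1) *ᵥ x₁ = g₃ (n₀ + 1)) :
    ∃ x : ℕ → Fin d → ℝ,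
      (x n₀ = x₀ ∧ x (n₀ + 1) = x₁ ∧
        ∀ n, n₀ ≤ n →
          A₁ n *ᵥ x (n + 2) + B₁ n *ᵥ x (n + 1) + C₁ n *ᵥ x n = g₁ n ∧
          B₂ n *ᵥ x (n + 1) + C₂ n *ᵥ x n = g₂ n ∧
          C₃ n *ᵥ x n = g₃ n) ∧
      ∀ y : ℕ → Fin d → ℝ,
        (y n₀ = x₀ ∧ y (n₀ + 1) = x₁ ∧
          ∀ n, n₀ ≤ n →
            A₁ n *ᵥ y (n + 2) + B₁ n *ᵥ y (n + 1) + C₁ n *ᵥ y n = g₁ n ∧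
            B₂ n *ᵥ y (n + 1) + C₂ n *ᵥ y n = g₂ n ∧
            C₃ n *ᵥ y n = g₃ n) →
        ∀ n, n₀ ≤ n → y n = x n := by
  set R : ℕ → (Fin d → ℝ) → (Fin d → ℝ) → (Fin d → ℝ) → Prop := fun n p q u =>
    A₁ n *ᵥ u + B₁ n *ᵥ q + C₁ n *ᵥ p = g₁ n ∧
    B₂ (n + 1) *ᵥ u + C₂ (n + 1) *ᵥ q = g₂ (n + 1) ∧
    C₃ (n + 2) *ᵥ u = g₃ (n + 2)
  have hR : ∀ n, n₀ ≤ n → ∀ p q, ∃! u, R n p q u := fun n hn p q => by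
    refine (existsUnique_congr fun u => ?_).1 <|
      existsUnique_mulVec_eq_of_isUnit_stacked _ _ _ _ (hinv n hn)
        (g₁ n - B₁ n *ᵥ q - C₁ n *ᵥ p) (g₂ (n + 1) - C₂ (n + 1) *ᵥ q) (g₃ (n + 2))
    rw [eq_sub_iff_add_eq, eq_sub_iff_add_eq, eq_sub_iff_add_eq, add_right_comm (A₁ n *ᵥ u)]
  have hsys : ∀ x : ℕ → Fin d → ℝ, x n₀ = x₀ → x (n₀ + 1) = x₁ →
      ((∀ n, n₀ ≤ n →
          A₁ n *ᵥ x (n + 2) + B₁ n *ᵥ x (n + 1) + C₁ n *ᵥ x n = g₁ n ∧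
          B₂ n *ᵥ x (n + 1) + C₂ n *ᵥ x n = g₂ n ∧
          C₃ n *ᵥ x n = g₃ n) ↔
        ∀ n, n₀ ≤ n → R n (x n) (x (n + 1)) (x (n + 2))) := by
    rintro x rfl rfl
    rw [forall_ge_and_and_iff]
    simp only [hcons₁, hcons₂, hcons₃, true_and]
    exact Iff.rfl
  obtain ⟨x, hx₀, hx₁, hx⟩ :=
    exists_twoStep_solution R n₀ (fun n hn p q => (hR n hn p q).exists) x₀ x₁
  refine ⟨x, ⟨hx₀, hx₁, (hsys x hx₀ hx₁).2 hx⟩, ?_⟩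
  rintro y ⟨hy₀, hy₁, hy⟩
  exact eq_of_twoStep_solutions R n₀ (fun n hn p q _ _ => (hR n hn p q).unique)
    (hy₀.trans hx₀.symm) (hy₁.trans hx₁.symm) hx ((hsys y hy₀ hy₁).1 hy)

/-- Unique solvability of the initial value problem for a strangeness-free
second order singular difference equation with square invertible stacked matrix
`[Â₁(n); B̂₂(n+1); Ĉ₃(n+2)]`, given consistent initial values and zero redundant
part. -/
theorem strangeness_free_ivp_unique_solution
    (d r₂ r₁ r₀ v n₀ : ℕ) (hd : r₂ + r₁ + r₀ = d)
    (A₁ B₁ C₁ : ℕ → Matrix (Fin r₂) (Fin d) ℝ)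
    (B₂ C₂ : ℕ → Matrix (Fin r₁) (Fin d) ℝ)
    (C₃ : ℕ → Matrix (Fin r₀) (Fin d) ℝ)
    (g₁ : ℕ → Fin r₂ → ℝ) (g₂ : ℕ → Fin r₁ → ℝ) (g₃ : ℕ → Fin r₀ → ℝ)
    (g₄ : ℕ → Fin v → ℝ)
    (hinv : ∀ n, n₀ ≤ n → IsUnit
      ((Matrix.fromRows (A₁ n) (Matrix.fromRows (B₂ (n + 1)) (C₃ (n + 2)))).submatrix
        (blockEquiv r₂ r₁ r₀ d hd).symm id))
    (hg₄ : ∀ n, n₀ ≤ n → g₄ n = 0)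
    (x₀ x₁ : Fin d → ℝ)
    (hcons₁ : B₂ n₀ *ᵥ x₁ + C₂ n₀ *ᵥ x₀ = g₂ n₀)
    (hcons₂ : C₃ n₀ *ᵥ x₀ = g₃ n₀)
    (hcons₃ : C₃ (n₀ + 1) *ᵥ x₁ = g₃ (n₀ + 1)) :
    ∃ x : ℕ → Fin d → ℝ,
      (x n₀ = x₀ ∧ x (n₀ + 1) = x₁ ∧
        ∀ n, n₀ ≤ n →
          A₁ n *ᵥ x (n + 2) + B₁ n *ᵥ x (n + 1) + C₁ n *ᵥ x n = g₁ n ∧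
          B₂ n *ᵥ x (n + 1) + C₂ n *ᵥ x n = g₂ n ∧
          C₃ n *ᵥ x n = g₃ n) ∧
      ∀ y : ℕ → Fin d → ℝ,
        (y n₀ = x₀ ∧ y (n₀ + 1) = x₁ ∧
          ∀ n, n₀ ≤ n →
            A₁ n *ᵥ y (n + 2) + B₁ n *ᵥ y (n + 1) + C₁ n *ᵥ y n = g₁ n ∧
            B₂ n *ᵥ y (n + 1) + C₂ n *ᵥ y n = g₂ n ∧
            C₃ n *ᵥ y n = g₃ n) →
        ∀ n, n₀ ≤ n → y n = x n :=
  strangeness_free_ivp_unique_solution_general d r₂ r₁ r₀ n₀ hd A₁ B₁ C₁ B₂ C₂ C₃ g₁ g₂ g₃ hinv x₀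
    x₁ hcons₁ hcons₂ hcons₃
end

section
/- Let Ǎ, B̌, Č ∈ ℝ^{m×d} and Ď ∈ ℝ^{m×p}. Then there exists an orthogonal matrix Ǔ ∈ ℝ^{m×m} such that Ǔ[Ǎ, B̌, Č | Ď] has the block structure with six block rows: [Ǎ₁, B̌₁, Č₁ | Ď₁; 0, B̌₂, Č₂ | 0; 0, 0, Č₃ | 0; 0, 0, 0 | 0; 0, B̌₄, Č₄ | Ď₄; 0, 0, Č₅ | Ď₅], where Ǎ₁, B̌₂, B̌₄, Č₃, and the stacked matrix [Ď₄; Ď₅] all have full row rank. -/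
open Matrix

/-!
The rows of `U` form an orthonormal basis of `ℝᵐ` adapted to an orthogonal decomposition built
from left kernels. A row `u` contributes a zero row to `U M` exactly when `uᵀ M = 0`, and rows
spanning a subspace that meets the left kernel of `M` trivially contribute a block of full row
rank. So each compression step splits a subspace `S` as `(S ∩ ker Mᵀ) ⊕ (S ∩ ker Mᵀ)ᗮ ∩ S`:
`ℝᵐ` by `A`, then `ker Aᵀ` by `D`, then `ker Aᵀ ∩ ker Dᵀ` by `B` and the result by `C`, and the
`D`-part of `ker Aᵀ` by `B`. The six resulting pieces are the six block rows.
-/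

open Submodule Module

section InnerProductSpace

variable {𝕜 E ι κ : Type*} [RCLike 𝕜] [NormedAddCommGroup E] [InnerProductSpace 𝕜 E]

theorem Orthonormal.sumElim_s12 {v : ι → E} {w : κ → E} (hv : Orthonormal 𝕜 v)
    (hw : Orthonormal 𝕜 w) {S T : Submodule 𝕜 E} (hST : S ⟂ T) (hvS : ∀ i, v i ∈ S)
    (hwT : ∀ j, w j ∈ T) : Orthonormal 𝕜 (Sum.elim v w) := by
  classical
  rw [orthonormal_iff_ite] at hv hw ⊢
  rintro (i | i) (j | j)
  · simpa using hv i j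
  · simpa using hST.inner_eq (hvS i) (hwT j)
  · simpa using hST.symm.inner_eq (hwT i) (hvS j)
  · simpa using hw i j

/-- Spanning is expressed by counting: an orthonormal family in `S` with `finrank S` members. -/
structure IsOrthonormalBasisOf [Fintype ι] (S : Submodule 𝕜 E) (v : ι → E) : Prop where
  orthonormal : Orthonormal 𝕜 v
  mem : ∀ i, v i ∈ S
  card_eq : Fintype.card ι = finrank 𝕜 S

namespace IsOrthonormalBasisOf

variable [Fintype ι] [Fintype κ] {S T : Submodule 𝕜 E} {v : ι → E} {w : κ → E}

theorem sumElim_s12 [FiniteDimensional 𝕜 E] (hv : IsOrthonormalBasisOf S v)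
    (hw : IsOrthonormalBasisOf T w) (hST : S ⟂ T) : IsOrthonormalBasisOf (S ⊔ T) (Sum.elim v w) where
  orthonormal := hv.orthonormal.sumElim_s12 hw.orthonormal hST hv.mem hw.mem
  mem := Sum.forall.2 ⟨fun i => mem_sup_left (hv.mem i), fun j => mem_sup_right (hw.mem j)⟩
  card_eq := by
    rw [Fintype.card_sum, hv.card_eq, hw.card_eq, ← finrank_sup_add_finrank_inf_eq,
      hST.disjoint.eq_bot, finrank_bot, add_zero]

theorem comp_equiv (hv : IsOrthonormalBasisOf S v) (e : κ ≃ ι) :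
    IsOrthonormalBasisOf S (v ∘ e) where
  orthonormal := hv.orthonormal.comp e e.injective
  mem i := hv.mem (e i)
  card_eq := (Fintype.card_congr e).trans hv.card_eq

end IsOrthonormalBasisOf

noncomputable def onb (S : Submodule 𝕜 E) [FiniteDimensional 𝕜 S] : Fin (finrank 𝕜 S) → E :=
  fun i => stdOrthonormalBasis 𝕜 S i

theorem onb_mem (S : Submodule 𝕜 E) [FiniteDimensional 𝕜 S] (i : Fin (finrank 𝕜 S)) :
    onb S i ∈ S :=
  (stdOrthonormalBasis 𝕜 S i).2

theorem isOrthonormalBasisOf_onb (S : Submodule 𝕜 E) [FiniteDimensional 𝕜 S] :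
    IsOrthonormalBasisOf S (onb S) where
  orthonormal := (stdOrthonormalBasis 𝕜 S).orthonormal.comp_linearIsometry S.subtypeₗᵢ
  mem := onb_mem S
  card_eq := Fintype.card_fin _

end InnerProductSpace

section Matrix

variable {ι m n : Type*}

def rowMatrix (v : ι → EuclideanSpace ℝ m) : Matrix ι m ℝ :=
  Matrix.of fun i => (v i).ofLp

theorem rowMatrix_sumElim {κ : Type*} (v : ι → EuclideanSpace ℝ m) (w : κ → EuclideanSpace ℝ m) :
    rowMatrix (Sum.elim v w) = fromRows (rowMatrix v) (rowMatrix w) := by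
  ext (i | i) j <;> rfl

variable [Fintype m]

/-- `{u | uᵀ M = 0}`, as a subspace of Euclidean space so that orthogonal complements exist. -/
def leftKer (M : Matrix m n ℝ) : Submodule ℝ (EuclideanSpace ℝ m) :=
  LinearMap.ker (M.vecMulLinear ∘ₗ (WithLp.linearEquiv 2 ℝ (m → ℝ)).toLinearMap)

theorem rowMatrix_mul_eq_zero {M : Matrix m n ℝ} {v : ι → EuclideanSpace ℝ m}
    (hv : ∀ i, v i ∈ leftKer M) : rowMatrix v * M = 0 := by
  ext i j
  exact congrFun (hv i) j

theorem rowMatrix_onb_mul_eq_zero {M : Matrix m n ℝ} {S : Submodule ℝ (EuclideanSpace ℝ m)}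
    (h : S ≤ leftKer M) : rowMatrix (onb S) * M = 0 :=
  rowMatrix_mul_eq_zero fun i => h (onb_mem S i)

theorem rank_rowMatrix_mul [Fintype ι] [Fintype n] {M : Matrix m n ℝ}
    {v : ι → EuclideanSpace ℝ m} (hv : LinearIndependent ℝ v)
    {S : Submodule ℝ (EuclideanSpace ℝ m)} (hvS : ∀ i, v i ∈ S) (hS : Disjoint S (leftKer M)) :
    (rowMatrix v * M).rank = Fintype.card ι := by
  apply LinearIndependent.rank_matrix
  exact hv.map (hS.mono_left (span_le.mpr (Set.range_subset_iff.mpr hvS)))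

theorem rank_rowMatrix_onb_mul [Fintype n] {M : Matrix m n ℝ}
    {S : Submodule ℝ (EuclideanSpace ℝ m)} (h : Disjoint S (leftKer M)) :
    (rowMatrix (onb S) * M).rank = finrank ℝ S := by
  simpa using rank_rowMatrix_mul (isOrthonormalBasisOf_onb S).orthonormal.linearIndependent
    (onb_mem S) h

theorem rowMatrix_mul_transpose [DecidableEq ι] {v : ι → EuclideanSpace ℝ m}
    (hv : Orthonormal ℝ v) : rowMatrix v * (rowMatrix v)ᵀ = 1 := by
  ext i j
  rw [one_apply, ← orthonormal_iff_ite.mp hv i j, EuclideanSpace.inner_eq_star_dotProduct]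
  simp [rowMatrix, mul_apply, dotProduct, mul_comm]

theorem exists_orthogonal_submatrix_mul_eq_rowMatrix_mul [Fintype ι] [DecidableEq m]
    {v : ι → EuclideanSpace ℝ m} (hv : Orthonormal ℝ v)
    (hcard : Fintype.card ι = Fintype.card m) :
    ∃ (U : Matrix m m ℝ) (e : ι ≃ m), Uᵀ * U = 1 ∧
      ∀ (k : Type*) (M : Matrix m k ℝ), (U * M).submatrix e id = rowMatrix v * M := by
  classical
  let e := Fintype.equivOfCardEq hcard
  refine ⟨(rowMatrix v).submatrix e.symm id, e, ?_, fun k M => ?_⟩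
  · rw [transpose_submatrix, submatrix_mul_equiv _ _ _ e.symm,
      (mul_eq_one_comm_of_equiv e).mp (rowMatrix_mul_transpose hv)]
    simp
  · rw [← submatrix_mul_equiv _ _ _ (Equiv.refl m)]
    simp

/-- Rows of `U` taken from here give a block of full row rank in `U M`; those taken from
`S ⊓ leftKer M` give a zero block. -/
noncomputable def fullRankPart (S : Submodule ℝ (EuclideanSpace ℝ m)) (M : Matrix m n ℝ) :
    Submodule ℝ (EuclideanSpace ℝ m) :=
  (S ⊓ leftKer M)ᗮ ⊓ S

variable (S : Submodule ℝ (EuclideanSpace ℝ m)) (M : Matrix m n ℝ)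

theorem disjoint_fullRankPart : Disjoint (fullRankPart S M) (leftKer M) :=
  disjoint_def.2 fun x hx hxM =>
    disjoint_def.1 (orthogonal_disjoint (S ⊓ leftKer M)).symm x hx.1 ⟨hx.2, hxM⟩

theorem isOrtho_fullRankPart : fullRankPart S M ⟂ S ⊓ leftKer M :=
  (isOrtho_orthogonal_left _).mono_left inf_le_left

theorem fullRankPart_sup_inf_leftKer : fullRankPart S M ⊔ (S ⊓ leftKer M) = S := by
  rw [sup_comm]
  exact sup_orthogonal_inf_of_hasOrthogonalProjection inf_le_left

variable {S M} {κ : Type*} [Fintype ι] [Fintype κ] {v : ι → EuclideanSpace ℝ m}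
  {w : κ → EuclideanSpace ℝ m}

theorem IsOrthonormalBasisOf.sumElim_fullRankPart
    (hv : IsOrthonormalBasisOf (fullRankPart S M) v) (hw : IsOrthonormalBasisOf (S ⊓ leftKer M) w) :
    IsOrthonormalBasisOf S (Sum.elim v w) :=
  fullRankPart_sup_inf_leftKer S M ▸ hv.sumElim_s12 hw (isOrtho_fullRankPart S M)

theorem IsOrthonormalBasisOf.sumElim_inf_leftKer
    (hw : IsOrthonormalBasisOf (S ⊓ leftKer M) w) (hv : IsOrthonormalBasisOf (fullRankPart S M) v) :
    IsOrthonormalBasisOf S (Sum.elim w v) := by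
  rw [← fullRankPart_sup_inf_leftKer S M, sup_comm]
  exact hw.sumElim_s12 hv (isOrtho_fullRankPart S M).symm

end Matrix

/-- Condensed form for a second order descriptor system: there is an orthogonal
matrix `U` bringing `[A, B, C | D]` to the six-block-row condensed form, where
`A₁`, `B₂`, `B₄`, `C₃` and `[D₄; D₅]` have full row rank. -/
theorem descriptor_condensed_form
    (m d p : ℕ) (A B C : Matrix (Fin m) (Fin d) ℝ) (D : Matrix (Fin m) (Fin p) ℝ) :
    ∃ (n₁ n₂ n₃ n₄ n₅ n₆ : ℕ) (_ : n₁ + n₂ + n₃ + n₄ + n₅ + n₆ = m)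
      (U : Matrix (Fin m) (Fin m) ℝ)
      (e : (Fin n₁ ⊕ (Fin n₂ ⊕ (Fin n₃ ⊕ (Fin n₄ ⊕ (Fin n₅ ⊕ Fin n₆))))) ≃ Fin m)
      (A₁ B₁ C₁ : Matrix (Fin n₁) (Fin d) ℝ) (D₁ : Matrix (Fin n₁) (Fin p) ℝ)
      (B₂ C₂ : Matrix (Fin n₂) (Fin d) ℝ)
      (C₃ : Matrix (Fin n₃) (Fin d) ℝ)
      (B₄ C₄ : Matrix (Fin n₅) (Fin d) ℝ) (D₄ : Matrix (Fin n₅) (Fin p) ℝ)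
      (C₅ : Matrix (Fin n₆) (Fin d) ℝ) (D₅ : Matrix (Fin n₆) (Fin p) ℝ),
      Uᵀ * U = 1 ∧
      (U * A).submatrix e id = Matrix.fromRows A₁
        (Matrix.fromRows 0 (Matrix.fromRows 0 (Matrix.fromRows 0 (Matrix.fromRows 0 0)))) ∧
      (U * B).submatrix e id = Matrix.fromRows B₁
        (Matrix.fromRows B₂ (Matrix.fromRows 0 (Matrix.fromRows 0 (Matrix.fromRows B₄ 0)))) ∧
      (U * C).submatrix e id = Matrix.fromRows C₁
        (Matrix.fromRows C₂ (Matrix.fromRows C₃ (Matrix.fromRows 0 (Matrix.fromRows C₄ C₅)))) ∧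
      (U * D).submatrix e id = Matrix.fromRows D₁
        (Matrix.fromRows 0 (Matrix.fromRows 0 (Matrix.fromRows 0 (Matrix.fromRows D₄ D₅)))) ∧
      A₁.rank = n₁ ∧ B₂.rank = n₂ ∧ C₃.rank = n₃ ∧ B₄.rank = n₅ ∧
      (Matrix.fromRows D₄ D₅).rank = n₅ + n₆ := by
  set K := ⊤ ⊓ leftKer A
  set P := K ⊓ leftKer D
  set Q := fullRankPart K D
  set T₂ := P ⊓ leftKer B
  set T₃ := T₂ ⊓ leftKer C
  set T₆ := Q ⊓ leftKer B
  have hT₂ := (isOrthonormalBasisOf_onb _).sumElim_fullRankPart (isOrthonormalBasisOf_onb T₃)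
  have hP := (isOrthonormalBasisOf_onb _).sumElim_fullRankPart hT₂
  have hQ := (isOrthonormalBasisOf_onb _).sumElim_fullRankPart (isOrthonormalBasisOf_onb T₆)
  -- reassociate the index type into the order of the six block rows
  have hE := ((isOrthonormalBasisOf_onb _).sumElim_fullRankPart
    (hP.sumElim_inf_leftKer hQ)).comp_equiv <| (Equiv.refl _).sumCongr <|
      ((Equiv.refl _).sumCongr (Equiv.sumAssoc _ _ _).symm).trans (Equiv.sumAssoc _ _ _).symm
  have hcard : Fintype.card _ = m := hE.card_eq.trans (by simp)
  obtain ⟨U, e, hU, hUM⟩ :=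
    exists_orthogonal_submatrix_mul_eq_rowMatrix_mul hE.orthonormal (by simpa using hcard)
  set V₁ := rowMatrix (onb (fullRankPart ⊤ A))
  set V₂ := rowMatrix (onb (fullRankPart P B))
  set V₃ := rowMatrix (onb (fullRankPart T₂ C))
  set V₄ := rowMatrix (onb T₃)
  set V₅ := rowMatrix (onb (fullRankPart Q B))
  set V₆ := rowMatrix (onb T₆)
  have hrows : ∀ {k : Type} (M : Matrix (Fin m) k ℝ), (U * M).submatrix e id = fromRows (V₁ * M)
      (fromRows (V₂ * M) (fromRows (V₃ * M) (fromRows (V₄ * M) (fromRows (V₅ * M) (V₆ * M))))) := by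
    intro k M
    rw [hUM k M]
    ext (i | i | i | i | i | i) j <;> rfl
  refine ⟨_, _, _, _, _, _, by simp at hcard; omega, U, e, V₁ * A, V₁ * B, V₁ * C, V₁ * D, V₂ * B,
    V₂ * C, V₃ * C, V₅ * B, V₅ * C, V₅ * D, V₆ * C, V₆ * D, hU, ?_, ?_, ?_, ?_,
    rank_rowMatrix_onb_mul (disjoint_fullRankPart ⊤ A),
    rank_rowMatrix_onb_mul (disjoint_fullRankPart P B),
    rank_rowMatrix_onb_mul (disjoint_fullRankPart T₂ C),
    rank_rowMatrix_onb_mul (disjoint_fullRankPart Q B), ?rankD⟩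
  case rankD =>
    rw [← fromRows_mul, ← rowMatrix_sumElim,
      rank_rowMatrix_mul hQ.orthonormal.linearIndependent hQ.mem (disjoint_fullRankPart K D)]
    simp
  all_goals
    rw [hrows]
    simp only [fromRows_ext_iff, true_and, and_true]
    and_intros
  all_goals
    apply rowMatrix_onb_mul_eq_zero
    simp only [K, P, Q, T₂, T₃, T₆, fullRankPart]
    order
end

section
/- Let A₁ ∈ ℝ^{a×d}, B₂ ∈ ℝ^{b×d}, C₃ ∈ ℝ^{c×d} be such that the stacked matrix [A₁; B₂; C₃] has full row rank (a+b+c ≤ d), and let Σ₁ ∈ ℝ^{b'×b'}, Σ₀ ∈ ℝ^{c'×c'} be nonsingular diagonal matrices with a+b+c+b'+c' ≤ d. Let B₄ ∈ ℝ^{b'×d} and C₅ ∈ ℝ^{c'×d} be arbitrary. Then there exist matrices G₁ ∈ ℝ^{b'×d}, G₀ ∈ ℝ^{c'×d} of the form G₁ = B₄ + Σ₁F₁ and G₀ = C₅ + Σ₀F₀ for some F₁ ∈ ℝ^{b'×d}, F₀ ∈ ℝ^{c'×d}, such that the stacked matrix [A₁; B₂; C₃; G₁; G₀] has full row rank. 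-/
open Matrix

/-- Feedback regularization: if `[A₁; B₂; C₃]` has full row rank and `Σ₁`, `Σ₀` are
nonsingular diagonal matrices, then there is a first order feedback `(F₁, F₀)` making
the stacked matrix `[A₁; B₂; C₃; B₄ + Σ₁F₁; C₅ + Σ₀F₀]` of full row rank. -/
theorem feedback_full_row_rank
    (a b c b' c' d : ℕ)
    (A₁ : Matrix (Fin a) (Fin d) ℝ)
    (B₂ : Matrix (Fin b) (Fin d) ℝ)
    (C₃ : Matrix (Fin c) (Fin d) ℝ)
    (B₄ : Matrix (Fin b') (Fin d) ℝ)
    (C₅ : Matrix (Fin c') (Fin d) ℝ)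
    (S₁ : Matrix (Fin b') (Fin b') ℝ)
    (S₀ : Matrix (Fin c') (Fin c') ℝ)
    (hd : a + b + c + b' + c' ≤ d)
    (hP : (Matrix.fromRows A₁ (Matrix.fromRows B₂ C₃)).rank = a + b + c)
    (hS₁diag : S₁.IsDiag) (hS₁ : IsUnit S₁)
    (hS₀diag : S₀.IsDiag) (hS₀ : IsUnit S₀) :
    ∃ (F₁ : Matrix (Fin b') (Fin d) ℝ) (F₀ : Matrix (Fin c') (Fin d) ℝ),
      (Matrix.fromRows A₁ (Matrix.fromRows B₂ (Matrix.fromRows C₃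
        (Matrix.fromRows (B₄ + S₁ * F₁) (C₅ + S₀ * F₀))))).rank =
        a + b + c + b' + c' := by
  classical
  -- the row family of `[A₁; B₂; C₃]`
  set p : (Fin a ⊕ (Fin b ⊕ Fin c)) → (Fin d → ℝ) := Sum.elim A₁ (Sum.elim B₂ C₃) with hp_def
  have hProw : Matrix.fromRows A₁ (Matrix.fromRows B₂ C₃) = Matrix.of p := by
    ext i j
    rcases i with i | (i | i) <;> rfl
  -- `p` is linearly independent
  have hp : LinearIndependent ℝ p := by
    rw [linearIndependent_iff_card_eq_finrank_span]
    have := (Matrix.fromRows A₁ (Matrix.fromRows B₂ C₃)).rank_eq_finrank_span_row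
    rw [hP, hProw] at this
    have hrr : Set.range (Matrix.of p).row = Set.range p := rfl
    rw [hrr] at this
    simp only [Fintype.card_sum, Fintype.card_fin, Set.finrank]
    omega
  -- the span of the rows and a complement
  set W : Submodule ℝ (Fin d → ℝ) := Submodule.span ℝ (Set.range p) with hW_def
  obtain ⟨U, hU⟩ := W.exists_isCompl
  have hWfin : Module.finrank ℝ W = a + b + c := by
    have := finrank_span_eq_card hp
    simp only [Fintype.card_sum, Fintype.card_fin] at this
    rw [hW_def, this]; ring
  have hUfin : b' + c' ≤ Module.finrank ℝ U := by
    have h1 : Module.finrank ℝ W + Module.finrank ℝ U = d := by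
      rw [Submodule.finrank_add_eq_of_isCompl hU]
      simp [Module.finrank_fintype_fun_eq_card]
    omega
  -- a basis of the complement
  let e := Module.finBasis ℝ U
  -- pick `b' + c'` independent vectors in `U`
  let emb : Fin b' ⊕ Fin c' → Fin (Module.finrank ℝ U) :=
    fun i => Fin.castLE hUfin (finSumFinEquiv i)
  have hemb : Function.Injective emb := by
    intro i j hij
    exact finSumFinEquiv.injective (Fin.castLE_injective hUfin hij)
  let q : Fin b' ⊕ Fin c' → (Fin d → ℝ) := fun i => (e (emb i) : Fin d → ℝ)
  have hq : LinearIndependent ℝ q := by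
    have h1 : LinearIndependent ℝ (fun i => e (emb i)) := e.linearIndependent.comp emb hemb
    exact h1.map' U.subtype (Submodule.ker_subtype U)
  have hqU : ∀ i, q i ∈ U := fun i => (e (emb i)).2
  -- combined family is linearly independent
  have hpq : LinearIndependent ℝ (Sum.elim p q) := by
    refine hp.sum_type hq ?_
    refine Disjoint.mono_right ?_ hU.disjoint
    rw [Submodule.span_le]
    rintro x ⟨i, rfl⟩
    exact hqU i
  -- the feedback matrices
  let G₁ : Matrix (Fin b') (Fin d) ℝ := Matrix.of fun i => q (Sum.inl i)
  let G₀ : Matrix (Fin c') (Fin d) ℝ := Matrix.of fun i => q (Sum.inr i)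
  have hS₁d : IsUnit S₁.det := (Matrix.isUnit_iff_isUnit_det S₁).mp hS₁
  have hS₀d : IsUnit S₀.det := (Matrix.isUnit_iff_isUnit_det S₀).mp hS₀
  refine ⟨S₁⁻¹ * (G₁ - B₄), S₀⁻¹ * (G₀ - C₅), ?_⟩
  have hG₁ : B₄ + S₁ * (S₁⁻¹ * (G₁ - B₄)) = G₁ := by
    rw [← Matrix.mul_assoc, Matrix.mul_nonsing_inv _ hS₁d, Matrix.one_mul]
    abel
  have hG₀ : C₅ + S₀ * (S₀⁻¹ * (G₀ - C₅)) = G₀ := by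
    rw [← Matrix.mul_assoc, Matrix.mul_nonsing_inv _ hS₀d, Matrix.one_mul]
    abel
  rw [hG₁, hG₀]
  -- the big matrix has independent rows
  set M := Matrix.fromRows A₁ (Matrix.fromRows B₂ (Matrix.fromRows C₃ (Matrix.fromRows G₁ G₀)))
    with hM_def
  let σ : (Fin a ⊕ (Fin b ⊕ (Fin c ⊕ (Fin b' ⊕ Fin c')))) →
      ((Fin a ⊕ (Fin b ⊕ Fin c)) ⊕ (Fin b' ⊕ Fin c')) :=
    Sum.elim (fun i => Sum.inl (Sum.inl i))
      (Sum.elim (fun i => Sum.inl (Sum.inr (Sum.inl i)))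
        (Sum.elim (fun i => Sum.inl (Sum.inr (Sum.inr i))) Sum.inr))
  have hσ : Function.Injective σ := by
    rintro (i | (i | (i | (i | i)))) (j | (j | (j | (j | j)))) h <;>
      simp_all [σ]
  have hMrow : M = Matrix.of ((Sum.elim p q) ∘ σ) := by
    ext i j
    rcases i with i | (i | (i | (i | i))) <;> rfl
  have hMind : LinearIndependent ℝ M := by
    rw [hMrow]
    exact hpq.comp σ hσ
  have := hMind.rank_matrix
  simp only [Fintype.card_sum, Fintype.card_fin] at this
  rw [show M.rank = a + (b + (c + (b' + c'))) from this]
  ring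
end

section
/- Let Q ∈ ℝ^{q×d} have full row rank with SVD U_Q Q V_Q = [Σ_Q, 0] (Σ_Q ∈ ℝ^{q×q} nonsingular diagonal, V_Q ∈ ℝ^{d×d} orthogonal), and let P ∈ ℝ^{p×d} have full row rank with SVD U_P P V_P = [Σ_P, 0], p + q ≤ d. Define F := V_Q [0, I_q; I_{d−q}, 0] V_Pᵀ ∈ ℝ^{d×d}. Then Q F V_P = U_Q^{-1}[0_{q×p}, 0_{q×(d−p−q)}, Σ_Q] and hence rank([P; QF]) = p + q. -/
/-!
Since `V_Pᵀ V_P = 1`, `Q F V_P = (Q V_Q) Π = U_Q⁻¹ [Σ_Q, 0] Π = U_Q⁻¹ [0, Σ_Q]`, where `Π` is the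
block permutation. Likewise `P V_P = U_P⁻¹ [Σ_P, 0]`, and `p + q ≤ d` lets both be written in the
common column partition `p + (d - p - q) + q`. Hence `[P; QF] V_P = diag(U_P⁻¹, U_Q⁻¹) M` with
`M = [Σ_P, 0, 0; 0, 0, Σ_Q]`, and `M` has the right inverse `[Σ_P⁻¹, 0; 0, 0; 0, Σ_Q⁻¹]`.
-/

open Matrix

theorem finSumFinEquiv_symm_apply_eq_dite {a b : ℕ} (j : Fin (a + b)) :
    finSumFinEquiv.symm j =
      if hj : (j : ℕ) < a then Sum.inl ⟨j, hj⟩ else Sum.inr ⟨j - a, by omega⟩ := by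
  rw [Equiv.symm_apply_eq]
  split_ifs with hj
  · ext; simp
  · ext; simp; omega

namespace Matrix

variable {m l R : Type*}

section Reindex

theorem fromCols_submatrix_finSumFinEquiv_apply {a b k : ℕ} (h : a + b = k)
    (X : Matrix m (Fin a) R) (Y : Matrix m (Fin b) R) (i : m) (j : Fin k) :
    (fromCols X Y).submatrix id (finSumFinEquiv.trans (finCongr h)).symm i j =
      if hj : (j : ℕ) < a then X i ⟨j, hj⟩ else Y i ⟨j - a, by omega⟩ := by
  simp only [submatrix_apply, Equiv.symm_trans_apply, finCongr_symm, finCongr_apply,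
    finSumFinEquiv_symm_apply_eq_dite, Fin.val_cast]
  split_ifs <;> rfl

theorem fromCols_fromCols_submatrix_apply {a b c k : ℕ} (h : a + (b + c) = k)
    (X : Matrix m (Fin a) R) (Y : Matrix m (Fin b) R) (Z : Matrix m (Fin c) R) (i : m)
    (j : Fin k) :
    (fromCols X (fromCols Y Z)).submatrix id
        (((Equiv.refl (Fin a)).sumCongr finSumFinEquiv).trans
          (finSumFinEquiv.trans (finCongr h))).symm i j =
      if hj : (j : ℕ) < a then X i ⟨j, hj⟩
      else if hj' : (j : ℕ) < a + b then Y i ⟨j - a, by omega⟩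
      else Z i ⟨j - a - b, by omega⟩ := by
  simp only [submatrix_apply, Equiv.symm_trans_apply, finCongr_symm, finCongr_apply,
    Equiv.sumCongr_symm, Equiv.sumCongr_apply, finSumFinEquiv_symm_apply_eq_dite, Fin.val_cast]
  split_ifs with hj hj'
  · rfl
  · simp only [Sum.map_inr, fromCols_apply_inr, id_eq]
    rw [finSumFinEquiv_symm_apply_eq_dite, dif_pos (by simp only; omega)]
    rfl
  · simp only [Sum.map_inr, fromCols_apply_inr, id_eq]
    rw [finSumFinEquiv_symm_apply_eq_dite, dif_neg (by simp only; omega)]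
    simp [Nat.sub_sub]

variable [Zero R]

theorem fromCols_zero_submatrix_eq_fromCols_fromCols_zero {a b b' c k : ℕ}
    (h : a + b = k) (h' : a + (b' + c) = k) (X : Matrix m (Fin a) R) :
    (fromCols X (0 : Matrix m (Fin b) R)).submatrix id (finSumFinEquiv.trans (finCongr h)).symm =
      (fromCols X (fromCols (0 : Matrix m (Fin b') R) (0 : Matrix m (Fin c) R))).submatrix id
        (((Equiv.refl (Fin a)).sumCongr finSumFinEquiv).trans
          (finSumFinEquiv.trans (finCongr h'))).symm := by
  ext i j
  rw [fromCols_submatrix_finSumFinEquiv_apply, fromCols_fromCols_submatrix_apply]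
  split_ifs <;> rfl

theorem zero_fromCols_submatrix_eq_fromCols_zero_fromCols {a b b' c k : ℕ}
    (h : b + c = k) (h' : a + (b' + c) = k) (Z : Matrix m (Fin c) R) :
    (fromCols (0 : Matrix m (Fin b) R) Z).submatrix id (finSumFinEquiv.trans (finCongr h)).symm =
      (fromCols (0 : Matrix m (Fin a) R) (fromCols (0 : Matrix m (Fin b') R) Z)).submatrix id
        (((Equiv.refl (Fin a)).sumCongr finSumFinEquiv).trans
          (finSumFinEquiv.trans (finCongr h'))).symm := by
  ext i j
  rw [fromCols_submatrix_finSumFinEquiv_apply, fromCols_fromCols_submatrix_apply]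
  split_ifs <;> first | omega | rfl | exact congrArg (Z i) (Fin.ext (by simp only; omega))

end Reindex

theorem fromCols_mul_fromBlocks_zero_one_one_zero {a b : Type*} [Fintype a] [Fintype b]
    [DecidableEq a] [DecidableEq b] [Semiring R] (X : Matrix m a R) (Y : Matrix m b R) :
    fromCols X Y * fromBlocks (0 : Matrix a b R) (1 : Matrix a a R) (1 : Matrix b b R)
      (0 : Matrix b a R) = fromCols Y X := by
  rw [fromCols_mul_fromBlocks]
  simp

theorem mul_eq_nonsing_inv_mul_of_mul_mul_eq {n k : Type*} [Fintype m] [DecidableEq m]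
    [Fintype n] [CommRing R] {U : Matrix m m R} {A : Matrix m n R} {V : Matrix n k R}
    {S : Matrix m k R} (hU : IsUnit U.det) (h : U * A * V = S) : A * V = U⁻¹ * S := by
  rw [← h, Matrix.mul_assoc]
  exact (nonsing_inv_mul_cancel_left _ _ hU).symm

theorem rank_fromRows_submatrix_id {k k' : Type*} [Fintype k] [Fintype k'] [CommSemiring R]
    (A : Matrix m k R) (B : Matrix l k R) (e : k' ≃ k) :
    (fromRows (A.submatrix id e) (B.submatrix id e)).rank = (fromRows A B).rank := by
  rw [show fromRows (A.submatrix id e) (B.submatrix id e) =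
      (fromRows A B).submatrix (Equiv.refl _) e by ext (i | i) j <;> rfl, rank_submatrix]

section Rank

variable {n : Type*} [Fintype m] [Fintype l] [Fintype n] [DecidableEq m] [DecidableEq l]
  [CommRing R]

theorem rank_fromRows_mul_of_isUnit_det {U : Matrix m m R} {V : Matrix l l R}
    (hU : IsUnit U.det) (hV : IsUnit V.det) (A : Matrix m n R) (B : Matrix l n R) :
    (fromRows (U * A) (V * B)).rank = (fromRows A B).rank := by
  rw [show fromRows (U * A) (V * B) = fromBlocks U 0 0 V * fromRows A B by
    simp [fromBlocks_mul_fromRows], rank_mul_eq_right_of_isUnit_det]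
  simpa [det_fromBlocks_zero₂₁] using hU.mul hV

variable [Nontrivial R]

theorem rank_eq_card_height_of_mul_eq_one {A : Matrix m n R} {B : Matrix n m R} (h : A * B = 1) :
    A.rank = Fintype.card m := by
  refine le_antisymm A.rank_le_card_height ?_
  simpa [h] using rank_mul_le_left A B

theorem rank_fromRows_fromCols_zero_of_isUnit {X : Matrix m m R} {Z : Matrix l l R}
    (hX : IsUnit X) (hZ : IsUnit Z) :
    (fromRows (fromCols X (fromCols (0 : Matrix m n R) 0))
      (fromCols 0 (fromCols (0 : Matrix l n R) Z))).rank = Fintype.card m + Fintype.card l := by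
  obtain ⟨X', hX'⟩ := hX.exists_right_inv
  obtain ⟨Z', hZ'⟩ := hZ.exists_right_inv
  rw [← Fintype.card_sum]
  refine rank_eq_card_height_of_mul_eq_one (B := fromCols (fromRows X' (fromRows 0 0))
    (fromRows 0 (fromRows 0 Z'))) ?_
  simp [fromBlocks_multiply, fromCols_mul_fromRows, hX', hZ', fromBlocks_one]

end Rank

end Matrix

/-- Explicit SVD construction: with SVDs `U_P P V_P = [Σ_P, 0]`,
`U_Q Q V_Q = [Σ_Q, 0]` and `F := V_Q [0, I_q; I_{d−q}, 0] V_Pᵀ`, one has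
`Q F V_P = U_Q⁻¹ [0, 0, Σ_Q]` and `rank [P; QF] = p + q`. -/
theorem svd_construction_full_row_rank
    (p q d : ℕ) (hpq : p + q ≤ d)
    (P : Matrix (Fin p) (Fin d) ℝ) (Q : Matrix (Fin q) (Fin d) ℝ)
    (UP : Matrix (Fin p) (Fin p) ℝ) (UQ : Matrix (Fin q) (Fin q) ℝ)
    (VP VQ : Matrix (Fin d) (Fin d) ℝ)
    (SP : Matrix (Fin p) (Fin p) ℝ) (SQ : Matrix (Fin q) (Fin q) ℝ)
    (hUP : UPᵀ * UP = 1) (hUQ : UQᵀ * UQ = 1)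
    (hVP : VPᵀ * VP = 1)
    (hSPu : IsUnit SP)
    (hSQu : IsUnit SQ)
    (hsvdP : UP * P * VP =
      (Matrix.fromCols SP (0 : Matrix (Fin p) (Fin (d - p)) ℝ)).submatrix id
        (finSumFinEquiv.trans (finCongr (show p + (d - p) = d by omega))).symm)
    (hsvdQ : UQ * Q * VQ =
      (Matrix.fromCols SQ (0 : Matrix (Fin q) (Fin (d - q)) ℝ)).submatrix id
        (finSumFinEquiv.trans (finCongr (show q + (d - q) = d by omega))).symm)
    (F : Matrix (Fin d) (Fin d) ℝ)
    (hF : F = VQ *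
      ((Matrix.fromBlocks (0 : Matrix (Fin q) (Fin (d - q)) ℝ)
          (1 : Matrix (Fin q) (Fin q) ℝ)
          (1 : Matrix (Fin (d - q)) (Fin (d - q)) ℝ)
          (0 : Matrix (Fin (d - q)) (Fin q) ℝ)).submatrix
        (finSumFinEquiv.trans (finCongr (show q + (d - q) = d by omega))).symm
        (finSumFinEquiv.trans (finCongr (show (d - q) + q = d by omega))).symm) *
      VPᵀ) :
    Q * F * VP = UQ⁻¹ *
      ((Matrix.fromCols (0 : Matrix (Fin q) (Fin p) ℝ)
          (Matrix.fromCols (0 : Matrix (Fin q) (Fin (d - p - q)) ℝ) SQ)).submatrix id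
        (((Equiv.refl (Fin p)).sumCongr finSumFinEquiv).trans
          (finSumFinEquiv.trans
            (finCongr (show p + (d - p - q + q) = d by omega)))).symm) ∧
    (Matrix.fromRows P (Q * F)).rank = p + q := by
  have hsplit : p + (d - p - q + q) = d := by omega
  have hUPdet := isUnit_det_of_left_inverse hUP
  have hUQdet := isUnit_det_of_left_inverse hUQ
  have hPVP := mul_eq_nonsing_inv_mul_of_mul_mul_eq hUPdet hsvdP
  have hQVQ := mul_eq_nonsing_inv_mul_of_mul_mul_eq hUQdet hsvdQ
  have hQFVP : Q * F * VP =
      UQ⁻¹ * (fromCols (0 : Matrix (Fin q) (Fin (d - q)) ℝ) SQ).submatrix id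
        (finSumFinEquiv.trans (finCongr (show (d - q) + q = d by omega))).symm := by
    rw [hF]
    simp only [Matrix.mul_assoc, hVP, Matrix.mul_one]
    rw [← Matrix.mul_assoc, hQVQ, Matrix.mul_assoc, submatrix_mul_equiv,
      fromCols_mul_fromBlocks_zero_one_one_zero]
  refine ⟨by rw [hQFVP, zero_fromCols_submatrix_eq_fromCols_zero_fromCols _ hsplit], ?_⟩
  rw [← rank_mul_eq_left_of_isUnit_det VP _ (isUnit_det_of_left_inverse hVP), fromRows_mul,
    hPVP, hQFVP, fromCols_zero_submatrix_eq_fromCols_fromCols_zero _ hsplit,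
    zero_fromCols_submatrix_eq_fromCols_zero_fromCols _ hsplit,
    rank_fromRows_mul_of_isUnit_det (isUnit_nonsing_inv_det _ hUPdet)
      (isUnit_nonsing_inv_det _ hUQdet),
    rank_fromRows_submatrix_id, rank_fromRows_fromCols_zero_of_isUnit hSPu hSQu,
    Fintype.card_fin, Fintype.card_fin]
end
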